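/- arXiv:1512.07505 — 3 statements merged into one kernel-verified Lean document; each statement's English description precedes it below -/
import Mathlib

section
/- Let F = {C_1, ..., C_j} be a finite family of j > d compact convex sets in R^d with nonempty intersection. Then the lexicographic minimum of the intersection of all sets in F equals the lexicographic minimum of the intersection of some subfamily of d sets from F. -/
/-!
The set of points lexicographically below `m` is convex. If `m` were not the lexicographic
minimum of any `d` of the sets, then every `d` of them would meet this set; since also all of
them contain `m`, any `d + 1` sets of the family `C₁, …, Cⱼ, {x <lex m}` intersect, and Helly's
theorem yields a point of `⋂ Cᵢ` lexicographically below `m`.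
-/

/-- Lexicographic strict order on `ℝ^d`. -/
def LexLt {d : ℕ} (x y : Fin d → ℝ) : Prop :=
  ∃ i : Fin d, (∀ j : Fin d, j < i → x j = y j) ∧ x i < y i

/-- `m` is the lexicographic minimum of `S`. -/
def IsLexMin {d : ℕ} (S : Set (Fin d → ℝ)) (m : Fin d → ℝ) : Prop :=
  m ∈ S ∧ ∀ x ∈ S, m = x ∨ LexLt m x

open Finset Module

theorem Convex.inter_iInter_nonempty_of_forall_card_eq_finrank {𝕜 E ι : Type*} [Field 𝕜]
    [LinearOrder 𝕜] [IsStrictOrderedRing 𝕜] [AddCommGroup E] [Module 𝕜 E] [FiniteDimensional 𝕜 E]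
    [Fintype ι] {C : ι → Set E} {H : Set E} (hC : ∀ i, Convex 𝕜 (C i)) (hH : Convex 𝕜 H)
    (hne : (⋂ i, C i).Nonempty) (hcard : finrank 𝕜 E ≤ Fintype.card ι)
    (hsub : ∀ t : Finset ι, #t = finrank 𝕜 E → (H ∩ ⋂ i ∈ t, C i).Nonempty) :
    (H ∩ ⋂ i, C i).Nonempty := by
  classical
  let F : Option ι → Set E := fun o => o.elim H C
  have hconv : ∀ o ∈ (univ : Finset (Option ι)), Convex 𝕜 (F o) := by
    rintro (_ | i) _
    exacts [hH, hC i]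
  suffices (⋂ o ∈ (univ : Finset (Option ι)), F o).Nonempty by
    simpa [F, Set.iInter_option] using this
  refine helly_theorem' hconv fun I _ hI => ?_
  by_cases hnone : none ∈ I
  · have : #I.eraseNone ≤ finrank 𝕜 E := by
      have := card_eraseNone_of_mem hnone
      omega
    obtain ⟨t, hIt, ht⟩ := exists_superset_card_eq this (by simpa using hcard)
    obtain ⟨x, hxH, hxC⟩ := hsub t ht
    refine ⟨x, Set.mem_iInter₂.2 ?_⟩
    rintro (_ | i) hi
    · exact hxH
    · exact Set.mem_iInter₂.1 hxC i (hIt (mem_eraseNone.2 hi))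
  · obtain ⟨x, hx⟩ := hne
    refine ⟨x, Set.mem_iInter₂.2 ?_⟩
    rintro (_ | i) hi
    · exact absurd hi hnone
    · exact Set.mem_iInter.1 hx i

instance Pi.Lex.posSMulStrictMono {ι 𝕜 : Type*} {β : ι → Type*} [LinearOrder ι]
    [Zero 𝕜] [Preorder 𝕜] [∀ i, PartialOrder (β i)] [∀ i, SMul 𝕜 (β i)]
    [∀ i, PosSMulStrictMono 𝕜 (β i)] : PosSMulStrictMono 𝕜 (Lex (∀ i, β i)) where
  smul_lt_smul_of_pos_left c hc _ _ := fun ⟨i, heq, hlt⟩ =>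
    ⟨i, fun j hj => congrArg (c • ·) (heq j hj), smul_lt_smul_of_pos_left hlt hc⟩

theorem lexLt_iff_toLex_lt {d : ℕ} {x y : Fin d → ℝ} : LexLt x y ↔ toLex x < toLex y :=
  Iff.rfl

theorem convex_setOf_lexLt {d : ℕ} (m : Fin d → ℝ) : Convex ℝ {x | LexLt x m} :=
  convex_Iio (toLex m)

theorem isLexMin_iff {d : ℕ} {S : Set (Fin d → ℝ)} {m : Fin d → ℝ} :
    IsLexMin S m ↔ m ∈ S ∧ ∀ x ∈ S, ¬LexLt x m := by
  refine and_congr_right fun _ => forall₂_congr fun x _ => ?_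
  rw [lexLt_iff_toLex_lt, lexLt_iff_toLex_lt, ← toLex_inj]
  exact le_iff_eq_or_lt.symm.trans not_lt.symm

theorem lex_min_of_d_tuple_general (d j : ℕ) (hdj : d < j) (C : Fin j → Set (Fin d → ℝ))
    (hconv : ∀ i, Convex ℝ (C i)) (m : Fin d → ℝ) (hm : IsLexMin (⋂ i, C i) m) :
    ∃ t : Finset (Fin j), t.card = d ∧ IsLexMin (⋂ i ∈ t, C i) m := by
  by_contra! hnot
  have hbelow : ∀ t : Finset (Fin j), #t = finrank ℝ (Fin d → ℝ) →
      ({x | LexLt x m} ∩ ⋂ i ∈ t, C i).Nonempty := by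
    intro t ht
    rw [finrank_fin_fun] at ht
    have hmt : m ∈ ⋂ i ∈ t, C i := Set.mem_iInter₂.2 fun i _ => Set.mem_iInter.1 hm.1 i
    obtain ⟨x, hx, hlt⟩ : ∃ x ∈ ⋂ i ∈ t, C i, LexLt x m := by
      simpa [isLexMin_iff, hmt] using hnot t ht
    exact ⟨x, hlt, hx⟩
  obtain ⟨x, hlt, hx⟩ := Convex.inter_iInter_nonempty_of_forall_card_eq_finrank hconv
    (convex_setOf_lexLt m) ⟨m, hm.1⟩ (by simpa using hdj.le) hbelow
  exact (isLexMin_iff.1 hm).2 x hx hlt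

/-- for a family of `j > d` compact convex sets in `ℝ^d` with nonempty
intersection, the lexicographic minimum of the whole intersection equals the
lexicographic minimum of the intersection of some `d` of the sets. -/
theorem lex_min_of_d_tuple (d j : ℕ) (hdj : d < j) (C : Fin j → Set (Fin d → ℝ))
    (hcomp : ∀ i, IsCompact (C i)) (hconv : ∀ i, Convex ℝ (C i))
    (hne : (⋂ i, C i).Nonempty) (m : Fin d → ℝ) (hm : IsLexMin (⋂ i, C i) m) :
    ∃ t : Finset (Fin j), t.card = d ∧ IsLexMin (⋂ i ∈ t, C i) m :=
  lex_min_of_d_tuple_general d j hdj C hconv m hm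
end

section
/- Let P ⊂ R^d be a set of n/r points, with d ≥ 3 and 1 ≤ j ≤ d−1, such that no d+2 points of P lie in a common hyperplane. Let V be an affine subspace of R^d of dimension d−j, and let S be a family of α·n^{j+1}/r^{j+1} many (j+1)-element subsets of P whose convex hulls each intersect V. Then there is a constant c_α (depending only on α, d) such that if n ≥ c_α·r, at least α·n^{j+1}/(2r^{j+1}) of the (j+1)-tuples in S have convex hulls intersecting V in exactly one point, lying in their relative interior. -/
/-
Call `B ⊆ P` deficient for the flat `V` when `B ∪ V` spans fewer than the expected
`min d (dim V + #B)` dimensions. A `(j+1)`-set no subset of which is deficient is an affinely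
independent simplex whose span meets `V` transversally, so it meets `V` in a single point; that
point lies in no proper face, hence in the relative interior.

Deficient sets are rare. A deficient `(k+1)`-set either contains a deficient `k`-set, or it is a
non-deficient `k`-set `B` together with a point of the proper flat spanned by `B ∪ V`; by general
position such a flat contains at most `d + 1` points of `P`. Hence there are `O(#P ^ (k-1))`
deficient `k`-sets and `O(#P ^ j)` `(j+1)`-sets containing one, which is at most half of
`#S = α #P ^ (j+1)` once `#P ≥ c_α`.
-/

open Finset Module

section

variable {k V P : Type*} [AddCommGroup V] [AddTorsor V P]

theorem Finset.card_lt_of_subset_of_affineSpan_eq_top [Ring k] [Module k V] {X Q : Finset P}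
    {N : ℕ} (hX : ∀ T ⊆ X, #T = N → affineSpan k (T : Set P) = ⊤) {L : AffineSubspace k P}
    (hL : L ≠ ⊤) (hQX : Q ⊆ X) (hQL : (Q : Set P) ⊆ L) : #Q < N := by
  by_contra! h
  obtain ⟨T, hTQ, hT⟩ := exists_subset_card_eq h
  apply hL
  rw [eq_top_iff, ← hX T (hTQ.trans hQX) hT, affineSpan_le]
  exact (coe_subset.2 hTQ).trans hQL

theorem AffineSubspace.finrank_direction_sup_add_finrank_inf [DivisionRing k] [Module k V]
    [FiniteDimensional k V] {s₁ s₂ : AffineSubspace k P} {p : P} (h₁ : p ∈ s₁)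
    (h₂ : p ∈ s₂) :
    finrank k (s₁ ⊔ s₂).direction + finrank k ↥(s₁.direction ⊓ s₂.direction) =
      finrank k s₁.direction + finrank k s₂.direction := by
  rw [AffineSubspace.direction_sup_eq_sup_direction h₁ h₂]
  exact Submodule.finrank_sup_add_finrank_inf_eq _ _

end

section JoinRank

variable {k V P : Type*} [DivisionRing k] [AddCommGroup V] [Module k V] [AddTorsor V P]

noncomputable def joinRank (F : AffineSubspace k P) (B : Finset P) : ℕ :=
  finrank k (affineSpan k (B : Set P) ⊔ F).direction

def JoinDeficient (F : AffineSubspace k P) (B : Finset P) : Prop :=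
  joinRank F B < min (finrank k V) (finrank k F.direction + #B)

noncomputable instance (F : AffineSubspace k P) (B : Finset P) : Decidable (JoinDeficient F B) :=
  inferInstanceAs (Decidable (_ < _))

variable {F : AffineSubspace k P}

theorem joinRank_empty : joinRank F ∅ = finrank k F.direction := by
  rw [joinRank, coe_empty, AffineSubspace.span_empty, bot_sup_eq]

open Classical in
theorem card_filter_mem_sup_le {X : Finset P}
    (hX : ∀ T ⊆ X, #T = finrank k V + 2 → affineSpan k (T : Set P) = ⊤) {B : Finset P}
    (hB : joinRank F B < finrank k V) :
    #{b ∈ X | b ∈ affineSpan k (B : Set P) ⊔ F} ≤ finrank k V + 1 := by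
  refine Nat.lt_succ_iff.1 (card_lt_of_subset_of_affineSpan_eq_top hX (fun htop => ?_)
    (filter_subset _ X) fun b hb => (mem_filter.1 hb).2)
  rw [joinRank, htop, AffineSubspace.direction_top, finrank_top] at hB
  exact hB.false

variable [FiniteDimensional k V]

theorem joinRank_mono {B C : Finset P} (h : B ⊆ C) : joinRank F B ≤ joinRank F C :=
  Submodule.finrank_mono <| AffineSubspace.direction_le <|
    sup_le_sup_right (affineSpan_mono k (coe_subset.2 h)) F

theorem not_joinDeficient_empty : ¬JoinDeficient F ∅ := by
  have := Submodule.finrank_le F.direction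
  simp only [JoinDeficient, joinRank_empty, card_empty, add_zero]
  omega

theorem JoinDeficient.erase_or [DecidableEq P] (hF : F ≠ ⊥)
    {B : Finset P} (hB : JoinDeficient F B) {b : P} (hb : b ∈ B) :
    JoinDeficient F (B.erase b) ∨
      joinRank F (B.erase b) < finrank k V ∧ b ∈ affineSpan k ↑(B.erase b) ⊔ F := by
  refine or_iff_not_imp_left.2 fun hB' => ?_
  have hmono := joinRank_mono (F := F) (erase_subset b B)
  have hcard := card_erase_add_one hb
  unfold JoinDeficient at hB hB'
  refine ⟨by omega, ?_⟩
  have hle : affineSpan k ↑(B.erase b) ⊔ F ≤ affineSpan k ↑B ⊔ F :=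
    sup_le_sup_right (affineSpan_mono k (coe_subset.2 (erase_subset b B))) F
  have hne : (↑(affineSpan k ↑(B.erase b) ⊔ F) : Set P).Nonempty := by
    obtain ⟨p, hp⟩ := (AffineSubspace.nonempty_iff_ne_bot F).2 hF
    exact ⟨p, le_sup_right (a := affineSpan k ↑(B.erase b)) hp⟩
  have heq := AffineSubspace.eq_of_direction_eq_of_nonempty_of_le
    (Submodule.eq_of_le_of_finrank_le (AffineSubspace.direction_le hle)
      (show joinRank F B ≤ joinRank F (B.erase b) by omega)) hne hle
  rw [heq]
  exact le_sup_left (a := affineSpan k (B : Set P)) (subset_affineSpan k _ hb)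

theorem joinRank_add_finrank_inf {B : Finset P} {x : P} (hxB : x ∈ affineSpan k (B : Set P))
    (hxF : x ∈ F) :
    joinRank F B + finrank k ↥(vectorSpan k (B : Set P) ⊓ F.direction) =
      finrank k (vectorSpan k (B : Set P)) + finrank k F.direction := by
  rw [joinRank, ← direction_affineSpan]
  exact AffineSubspace.finrank_direction_sup_add_finrank_inf hxB hxF

theorem joinDeficient_of_mem_affineSpan {B : Finset P} {x : P}
    (hxB : x ∈ affineSpan k (B : Set P)) (hxF : x ∈ F)
    (hcard : finrank k F.direction + #B ≤ finrank k V) : JoinDeficient F B := by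
  classical
  have hB := card_pos.2 (coe_nonempty.1 ((affineSpan_nonempty k).1 ⟨x, hxB⟩))
  have hspan := finrank_vectorSpan_image_finset_le k id B (n := #B - 1) (by omega)
  rw [image_id] at hspan
  have := joinRank_add_finrank_inf hxB hxF
  unfold JoinDeficient
  omega

theorem affineIndependent_and_inf_eq_bot_of_not_joinDeficient {A : Finset P}
    (hA : ¬JoinDeficient F A) (hcard : finrank k F.direction + #A = finrank k V + 1) {x : P}
    (hxA : x ∈ affineSpan k (A : Set P)) (hxF : x ∈ F) :
    AffineIndependent k ((↑) : A → P) ∧ vectorSpan k (A : Set P) ⊓ F.direction = ⊥ := by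
  have hrange : Set.range ((↑) : A → P) = A := Subtype.range_coe
  have hA1 : 1 ≤ #A := card_pos.2 (coe_nonempty.1 ((affineSpan_nonempty k).1 ⟨x, hxA⟩))
  have hspan := finrank_vectorSpan_range_le k ((↑) : A → P) (n := #A - 1)
    (by rw [Fintype.card_coe]; omega)
  have := joinRank_add_finrank_inf hxA hxF
  unfold JoinDeficient at hA
  rw [hrange] at hspan
  refine ⟨(affineIndependent_iff_le_finrank_vectorSpan k _ (n := #A - 1)
    (by rw [Fintype.card_coe]; omega)).2 (by rw [hrange]; omega), ?_⟩
  exact Submodule.finrank_eq_zero.1 (by omega)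

variable {X : Finset P}

theorem card_joinDeficient_succ_le (hF : F ≠ ⊥)
    (hX : ∀ T ⊆ X, #T = finrank k V + 2 → affineSpan k (T : Set P) = ⊤) (m : ℕ) :
    #{B ∈ X.powersetCard (m + 1) | JoinDeficient F B} ≤
      #{B ∈ X.powersetCard m | JoinDeficient F B} * #X + #X ^ m * (finrank k V + 1) := by
  classical
  set T₁ := {B ∈ X.powersetCard m | JoinDeficient F B} ×ˢ X
  set T₂ := {B ∈ X.powersetCard m | joinRank F B < finrank k V}.biUnion
    fun B => {B} ×ˢ {b ∈ X | b ∈ affineSpan k (B : Set P) ⊔ F}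
  have hsurj : Set.SurjOn (fun p : Finset P × P => insert p.2 p.1) ↑(T₁ ∪ T₂)
      ↑{B ∈ X.powersetCard (m + 1) | JoinDeficient F B} := by
    intro B hB
    simp only [coe_filter, mem_powersetCard, Set.mem_ofPred_eq] at hB
    obtain ⟨⟨hBX, hBcard⟩, hB⟩ := hB
    obtain ⟨b, hb⟩ := card_pos.1 (by omega : 0 < #B)
    have hB' : B.erase b ⊆ X ∧ #(B.erase b) = m :=
      ⟨(erase_subset b B).trans hBX, by rw [card_erase_of_mem hb, hBcard]; rfl⟩
    refine ⟨(B.erase b, b), ?_, insert_erase hb⟩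
    rcases hB.erase_or hF hb with hdef | ⟨hrank, hmem⟩
    · exact mem_union_left _ (mem_product.2 ⟨by simp [hB', hdef], hBX hb⟩)
    · exact mem_union_right _ (mem_biUnion.2 ⟨B.erase b, by simp [hB', hrank],
        mem_product.2 ⟨mem_singleton_self _, mem_filter.2 ⟨hBX hb, hmem⟩⟩⟩)
  have hT₂ : #T₂ ≤ #X ^ m * (finrank k V + 1) := by
    refine card_biUnion_le.trans ?_
    calc ∑ B ∈ {B ∈ X.powersetCard m | joinRank F B < finrank k V},
          #({B} ×ˢ {b ∈ X | b ∈ affineSpan k (B : Set P) ⊔ F})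
        ≤ ∑ _B ∈ {B ∈ X.powersetCard m | joinRank F B < finrank k V}, (finrank k V + 1) :=
          sum_le_sum fun B hB => by
            rw [card_product, card_singleton, one_mul]
            exact card_filter_mem_sup_le hX (mem_filter.1 hB).2
      _ ≤ #X ^ m * (finrank k V + 1) := by
          rw [sum_const, smul_eq_mul]
          gcongr
          exact (card_filter_le _ _).trans
            ((card_powersetCard m X).trans_le (Nat.choose_le_pow _ _))
  calc #{B ∈ X.powersetCard (m + 1) | JoinDeficient F B}
      ≤ #(T₁ ∪ T₂) := card_le_card_of_surjOn _ hsurj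
    _ ≤ #T₁ + #T₂ := card_union_le _ _
    _ ≤ _ := by rw [card_product]; gcongr

theorem card_joinDeficient_le (hF : F ≠ ⊥)
    (hX : ∀ T ⊆ X, #T = finrank k V + 2 → affineSpan k (T : Set P) = ⊤) (m : ℕ) :
    #{B ∈ X.powersetCard m | JoinDeficient F B} ≤ (finrank k V + 1) * m * #X ^ (m - 1) := by
  induction m with
  | zero => simp [not_joinDeficient_empty]
  | succ m ih =>
    refine (card_joinDeficient_succ_le hF hX m).trans ?_
    have hpow : m * #X ^ (m - 1) * #X = m * #X ^ m := by
      cases m <;> simp [pow_succ, mul_assoc]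
    calc _ ≤ (finrank k V + 1) * m * #X ^ (m - 1) * #X + #X ^ m * (finrank k V + 1) := by gcongr
      _ = (finrank k V + 1) * (m + 1) * #X ^ (m + 1 - 1) := by
        rw [Nat.add_sub_cancel, mul_assoc _ _ (_ ^ _), mul_assoc _ (_ * _), hpow]; ring

theorem card_exists_joinDeficient_subset_le (hF : F ≠ ⊥)
    (hX : ∀ T ⊆ X, #T = finrank k V + 2 → affineSpan k (T : Set P) = ⊤) (l : ℕ) :
    #{A ∈ X.powersetCard l | ∃ B ⊆ A, JoinDeficient F B} ≤
      (l + 1) * ((finrank k V + 1) * l * #X ^ (l - 1)) := by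
  classical
  set U := (range (l + 1)).biUnion fun i =>
    {B ∈ X.powersetCard i | JoinDeficient F B} ×ˢ X.powersetCard (l - i)
  have hsurj : Set.SurjOn (fun p : Finset P × Finset P => p.1 ∪ p.2) ↑U
      ↑{A ∈ X.powersetCard l | ∃ B ⊆ A, JoinDeficient F B} := by
    intro A hA
    simp only [coe_filter, mem_powersetCard, Set.mem_ofPred_eq] at hA
    obtain ⟨⟨hAX, hAcard⟩, B, hBA, hB⟩ := hA
    have hBl : #B ≤ l := hAcard ▸ card_le_card hBA
    refine ⟨(B, A \ B), mem_biUnion.2 ⟨#B, mem_range.2 (by omega), ?_⟩,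
      union_sdiff_of_subset hBA⟩
    simp [hBA.trans hAX, hB, sdiff_subset.trans hAX, card_sdiff_of_subset hBA, hAcard]
  have hterm : ∀ i ∈ range (l + 1),
      #({B ∈ X.powersetCard i | JoinDeficient F B} ×ˢ X.powersetCard (l - i)) ≤
        (finrank k V + 1) * l * #X ^ (l - 1) := by
    intro i hi
    rw [card_product, card_powersetCard]
    refine (Nat.mul_le_mul (card_joinDeficient_le hF hX i) (Nat.choose_le_pow _ _)).trans ?_
    rcases Nat.eq_zero_or_pos i with rfl | hi0
    · simp
    · have hil : i ≤ l := Nat.lt_succ_iff.1 (mem_range.1 hi)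
      rw [mul_assoc, ← pow_add, show i - 1 + (l - i) = l - 1 by omega]
      gcongr
  calc _ ≤ #U := card_le_card_of_surjOn _ hsurj
    _ ≤ _ := card_biUnion_le.trans ((sum_le_sum hterm).trans (by simp))

end JoinRank

theorem AffineIndependent.affineCombination_mem_intrinsicInterior {ι E : Type*} [Fintype ι]
    [NormedAddCommGroup E] [NormedSpace ℝ E] {p : ι → E} (hp : AffineIndependent ℝ p)
    {w : ι → ℝ} (hw₁ : ∑ i, w i = 1) (hw₀ : ∀ i, 0 < w i) :
    univ.affineCombination ℝ p w ∈ intrinsicInterior ℝ (convexHull ℝ (Set.range p)) := by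
  set x := univ.affineCombination ℝ p w
  set D := vectorSpan ℝ (Set.range p)
  have : Nonempty ι := by
    by_contra!
    simp at hw₁
  have hxD : x ∈ affineSpan ℝ (Set.range p) := affineCombination_mem_affineSpan hw₁ p
  have hq (i : ι) : p i -ᵥ x ∈ D := by
    simpa only [direction_affineSpan] using
      AffineSubspace.vsub_mem_direction (mem_affineSpan ℝ (Set.mem_range_self i)) hxD
  -- Transport to the direction space `D`, where the vertices form an affine basis and `x` is `0`.
  let q : ι → D := fun i => ⟨p i -ᵥ x, hq i⟩
  let φ : D →ᵃⁱ[ℝ] E := (AffineIsometryEquiv.vaddConst ℝ x).toAffineIsometry.comp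
    D.subtypeₗᵢ.toAffineIsometry
  have hφq : φ ∘ q = p := funext fun i => vsub_vadd (p i) x
  have hq_ind : AffineIndependent ℝ q :=
    AffineIndependent.of_comp φ.toAffineMap (by simpa [hφq] using hp)
  have hq_span : affineSpan ℝ (Set.range q) = ⊤ :=
    hq_ind.affineSpan_eq_top_iff_card_eq_finrank_add_one.2 hp.finrank_vectorSpan_add_one.symm
  let b : AffineBasis ι ℝ D := ⟨q, hq_ind, hq_span⟩
  have h0 : (0 : D) = univ.affineCombination ℝ b w := by
    apply φ.injective
    rw [← AffineIsometry.coe_toAffineMap, univ.map_affineCombination _ _ hw₁,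
      AffineIsometry.coe_toAffineMap, show ⇑b = q from rfl, hφq]
    simp [φ, x]
  have h0_mem : (0 : D) ∈ interior (convexHull ℝ (Set.range b)) := by
    rw [b.interior_convexHull]
    intro i
    rw [h0, b.coord_apply_combination_of_mem (mem_univ i) hw₁]
    exact hw₀ i
  have himage : φ '' convexHull ℝ (Set.range q) = convexHull ℝ (Set.range p) := by
    rw [← AffineIsometry.coe_toAffineMap, AffineMap.image_convexHull, ← Set.range_comp,
      AffineIsometry.coe_toAffineMap, hφq]
  rw [← himage, AffineIsometry.intrinsicInterior_image]
  exact ⟨0, interior_subset_intrinsicInterior h0_mem, by simp [φ]⟩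

section IntrinsicInterior

variable {E : Type*} [NormedAddCommGroup E] [NormedSpace ℝ E] [FiniteDimensional ℝ E]

def MeetsOnceInIntrinsicInterior (F : AffineSubspace ℝ E) (A : Finset E) : Prop :=
  ∃ x, convexHull ℝ (A : Set E) ∩ F = {x} ∧
    x ∈ intrinsicInterior ℝ (convexHull ℝ (A : Set E))

theorem meetsOnceInIntrinsicInterior_of_forall_not_joinDeficient {F : AffineSubspace ℝ E}
    {A : Finset E} (hcard : finrank ℝ F.direction + #A = finrank ℝ E + 1)
    (hA : ∀ B ⊆ A, ¬JoinDeficient F B) (hne : (convexHull ℝ (A : Set E) ∩ F).Nonempty) :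
    MeetsOnceInIntrinsicInterior F A := by
  classical
  obtain ⟨x, hxA, hxF⟩ := hne
  obtain ⟨hind, hinf⟩ := affineIndependent_and_inf_eq_bot_of_not_joinDeficient
    (hA A Subset.rfl) hcard (convexHull_subset_affineSpan _ hxA) hxF
  refine ⟨x, Set.eq_singleton_iff_unique_mem.2 ⟨⟨hxA, hxF⟩, fun y ⟨hyA, hyF⟩ => ?_⟩,
    ?_⟩
  · have hyx : y -ᵥ x ∈ vectorSpan ℝ (A : Set E) ⊓ F.direction :=
      ⟨vsub_mem_vectorSpan_of_mem_affineSpan_of_mem_affineSpan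
          (convexHull_subset_affineSpan _ hyA) (convexHull_subset_affineSpan _ hxA),
        AffineSubspace.vsub_mem_direction hyF hxF⟩
    rwa [hinf, Submodule.mem_bot, vsub_eq_zero_iff_eq] at hyx
  obtain ⟨w, hw₀, hw₁, rfl⟩ := mem_convexHull'.1 hxA
  -- a vanishing weight would put the meeting point in the span of a proper face
  have hwpos : ∀ a ∈ A, 0 < w a := by
    refine fun a ha => (hw₀ a ha).lt_of_ne' fun hwa => hA (A.erase a) (erase_subset a A) ?_
    have hface : ∑ y ∈ A, w y • y ∈ convexHull ℝ (A.erase a : Set E) :=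
      mem_convexHull'.2 ⟨w, fun y hy => hw₀ y (mem_of_mem_erase hy),
        by rwa [sum_erase A hwa], sum_erase A (by simp [hwa])⟩
    exact joinDeficient_of_mem_affineSpan (convexHull_subset_affineSpan _ hface) hxF
      (by have := card_pos.2 ⟨a, ha⟩; rw [card_erase_of_mem ha]; omega)
  have hw₁' : ∑ a : A, w a = 1 := by rwa [sum_coe_sort A w]
  have := hind.affineCombination_mem_intrinsicInterior hw₁' fun a => hwpos a a.2
  rwa [affineCombination_eq_linear_combination _ _ _ hw₁', sum_coe_sort A (fun y => w y • y),
    Subtype.range_coe] at this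

open Classical in
theorem card_filter_not_meetsOnceInIntrinsicInterior_le {F : AffineSubspace ℝ E} (hF : F ≠ ⊥)
    {X : Finset E} (hX : ∀ T ⊆ X, #T = finrank ℝ E + 2 → affineSpan ℝ (T : Set E) = ⊤)
    {l : ℕ}    (hl : finrank ℝ F.direction + l = finrank ℝ E + 1) {S : Finset (Finset E)}
    (hS : ∀ A ∈ S, A ⊆ X ∧ #A = l ∧ (convexHull ℝ (A : Set E) ∩ F).Nonempty) :
    #{A ∈ S | ¬MeetsOnceInIntrinsicInterior F A} ≤
      (l + 1) * ((finrank ℝ E + 1) * l * #X ^ (l - 1)) := by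
  refine (card_le_card fun A hA => ?_).trans (card_exists_joinDeficient_subset_le hF hX l)
  obtain ⟨hAS, hA⟩ := mem_filter.1 hA
  obtain ⟨hAX, hAcard, hAF⟩ := hS A hAS
  refine mem_filter.2 ⟨mem_powersetCard.2 ⟨hAX, hAcard⟩, ?_⟩
  by_contra! hnd
  exact hA (meetsOnceInIntrinsicInterior_of_forall_not_joinDeficient (hAcard ▸ hl) hnd hAF)

end IntrinsicInterior

theorem many_simplices_meet_once_general (d j : ℕ) (hjd : j ≤ d - 1)
    (α : ℝ) (hα : 0 < α) :
    ∃ cα : ℝ, ∀ (n r : ℝ), 0 < r → cα * r ≤ n →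
      ∀ (P : Finset (Fin d → ℝ)), (P.card : ℝ) = n / r →
      (∀ T : Finset (Fin d → ℝ), T ⊆ P → T.card = d + 2 →
        affineSpan ℝ (T : Set (Fin d → ℝ)) = ⊤) →
      ∀ (V : AffineSubspace ℝ (Fin d → ℝ)), V ≠ ⊥ →
        Module.finrank ℝ V.direction = d - j →
      ∀ (S : Finset (Finset (Fin d → ℝ))),
        (∀ A ∈ S, A ⊆ P ∧ A.card = j + 1 ∧
          (convexHull ℝ (A : Set (Fin d → ℝ)) ∩ (V : Set (Fin d → ℝ))).Nonempty) →
        (S.card : ℝ) = α * n ^ (j + 1) / r ^ (j + 1) →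
      α * n ^ (j + 1) / (2 * r ^ (j + 1))
        ≤ ({A : Finset (Fin d → ℝ) | A ∈ S ∧ ∃ x : Fin d → ℝ,
              convexHull ℝ (A : Set (Fin d → ℝ)) ∩ (V : Set (Fin d → ℝ)) = {x} ∧
              x ∈ intrinsicInterior ℝ (convexHull ℝ (A : Set (Fin d → ℝ)))}.ncard : ℝ) := by
  classical
  set K : ℕ := (j + 1 + 1) * ((d + 1) * (j + 1))
  refine ⟨2 * K / α, fun n r hr hn P hPcard hP V hV hVdim S hS hScard => ?_⟩
  have hbad := card_filter_not_meetsOnceInIntrinsicInterior_le hV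
    (by rwa [finrank_fin_fun]) (by rw [hVdim, finrank_fin_fun]; omega) hS
  rw [finrank_fin_fun, Nat.add_sub_cancel, ← mul_assoc] at hbad
  have hsplit := card_filter_add_card_filter_not (s := S) (MeetsOnceInIntrinsicInterior V)
  have hm : 2 * K ≤ α * #P := by
    rw [hPcard, ← div_le_iff₀' hα, le_div_iff₀ hr]; exact hn
  have hn' : n = #P * r := by rw [hPcard, div_mul_cancel₀ n hr.ne']
  rw [hn', mul_pow, mul_div_assoc, mul_div_cancel_right₀ _ (pow_ne_zero _ hr.ne')] at hScard
  change _ ≤ (({A | A ∈ S ∧ MeetsOnceInIntrinsicInterior V A} : Set _).ncard : ℝ)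
  rw [← coe_filter, Set.ncard_coe_finset, hn', mul_pow, ← mul_assoc,
    mul_div_mul_right _ _ (pow_ne_zero _ hr.ne')]
  have hbadR : (#{A ∈ S | ¬MeetsOnceInIntrinsicInterior V A} : ℝ) ≤ K * #P ^ j := by
    exact_mod_cast hbad
  have hsplitR : (#{A ∈ S | MeetsOnceInIntrinsicInterior V A} : ℝ) +
      #{A ∈ S | ¬MeetsOnceInIntrinsicInterior V A} = #S := by exact_mod_cast hsplit
  have hKm := mul_le_mul_of_nonneg_right hm (pow_nonneg (Nat.cast_nonneg #P) j)
  rw [pow_succ] at hScard ⊢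
  nlinarith

/-- Let `P ⊂ ℝ^d` (`d ≥ 3`) be a set of `n/r` points with no `d+2`
of them in a hyperplane, `V` an affine subspace of dimension `d-j` (`1 ≤ j ≤ d-1`),
and `S` a family of `α·n^{j+1}/r^{j+1}` many `(j+1)`-subsets of `P` whose convex
hulls all meet `V`. Then there is `c_α` depending only on `α, d, j` such that if
`n ≥ c_α·r`, at least `α·n^{j+1}/(2r^{j+1})` of the members of `S` have convex
hulls meeting `V` in exactly one point, lying in their relative interior. -/
theorem many_simplices_meet_once (d j : ℕ) (hd : 3 ≤ d) (hj1 : 1 ≤ j) (hjd : j ≤ d - 1)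
    (α : ℝ) (hα : 0 < α) :
    ∃ cα : ℝ, ∀ (n r : ℝ), 0 < r → cα * r ≤ n →
      ∀ (P : Finset (Fin d → ℝ)), (P.card : ℝ) = n / r →
      (∀ T : Finset (Fin d → ℝ), T ⊆ P → T.card = d + 2 →
        affineSpan ℝ (T : Set (Fin d → ℝ)) = ⊤) →
      ∀ (V : AffineSubspace ℝ (Fin d → ℝ)), V ≠ ⊥ →
        Module.finrank ℝ V.direction = d - j →
      ∀ (S : Finset (Finset (Fin d → ℝ))),
        (∀ A ∈ S, A ⊆ P ∧ A.card = j + 1 ∧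
          (convexHull ℝ (A : Set (Fin d → ℝ)) ∩ (V : Set (Fin d → ℝ))).Nonempty) →
        (S.card : ℝ) = α * n ^ (j + 1) / r ^ (j + 1) →
      α * n ^ (j + 1) / (2 * r ^ (j + 1))
        ≤ ({A : Finset (Fin d → ℝ) | A ∈ S ∧ ∃ x : Fin d → ℝ,
              convexHull ℝ (A : Set (Fin d → ℝ)) ∩ (V : Set (Fin d → ℝ)) = {x} ∧
              x ∈ intrinsicInterior ℝ (convexHull ℝ (A : Set (Fin d → ℝ)))}.ncard : ℝ) :=
  many_simplices_meet_once_general d j hjd α hα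
end

section
/- Let A be a (j+1)-element subset of R^d whose convex hull intersects an affine subspace V in more than one point, or intersects V in a point of its relative boundary. Then there exists a j-element subset of A whose convex hull intersects V. -/
/-!
If `V` meets `conv A` in two points `x ≠ y`, follow the line from `y` through `x`: the barycentric
weights vary affinely along it, so the first parameter at which one of them reaches `0` gives a
point of `V` in a facet `conv (A \ {a})`. If `V` meets the relative boundary at `x`, then some
barycentric weight of `x` must already vanish, because for an affinely independent `A` the
barycentric coordinates are continuous on `affineSpan A` and the points with all of them positive
form a relatively open subset of `conv A`.
-/

theorem Finset.exists_forall_nonneg_add_mul_sub_eq_zero {α : Type*} {s : Finset α}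
    {u v : α → ℝ} (hu : ∀ a ∈ s, 0 ≤ u a) (hvu : ∃ a ∈ s, v a < u a) :
    ∃ t : ℝ, (∀ a ∈ s, 0 ≤ u a + t * (v a - u a)) ∧ ∃ a ∈ s, u a + t * (v a - u a) = 0 := by
  classical
  set S := s.filter fun a => v a < u a
  have hS : S.Nonempty := by simpa [S, Finset.filter_nonempty_iff] using hvu
  obtain ⟨a₀, ha₀S, hmin⟩ := S.exists_mem_eq_inf' hS fun a => u a / (u a - v a)
  obtain ⟨ha₀, hvu₀⟩ := Finset.mem_filter.mp ha₀S
  set t := S.inf' hS fun a => u a / (u a - v a)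
  have ht : 0 ≤ t := hmin ▸ div_nonneg (hu a₀ ha₀) (sub_pos.2 hvu₀).le
  refine ⟨t, fun a ha => ?_, a₀, ha₀, ?_⟩
  · by_cases hva : v a < u a
    · have hta : t ≤ u a / (u a - v a) := S.inf'_le _ (Finset.mem_filter.2 ⟨ha, hva⟩)
      rw [le_div_iff₀ (sub_pos.2 hva)] at hta
      linarith
    · nlinarith [hu a ha]
  · rw [hmin]
    field_simp [(sub_pos.2 hvu₀).ne']
    ring

section ConvexHull

variable {E : Type*} [AddCommGroup E] [Module ℝ E]

theorem Finset.sum_smul_mem_convexHull_erase [DecidableEq E] {A : Finset E} {w : E → ℝ}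
    (hw₀ : ∀ a ∈ A, 0 ≤ w a) (hw₁ : ∑ a ∈ A, w a = 1) {a₀ : E} (ha₀ : w a₀ = 0) :
    ∑ a ∈ A, w a • a ∈ convexHull ℝ (A.erase a₀ : Set E) :=
  Finset.mem_convexHull'.2 ⟨w, fun a ha => hw₀ a (Finset.mem_of_mem_erase ha),
    by rwa [Finset.sum_erase _ ha₀], Finset.sum_erase _ (by rw [ha₀, zero_smul])⟩

theorem Finset.exists_lineMap_mem_convexHull_erase [DecidableEq E] {A : Finset E} {x y : E}
    (hx : x ∈ convexHull ℝ (A : Set E)) (hy : y ∈ convexHull ℝ (A : Set E)) (hxy : x ≠ y) :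
    ∃ a ∈ A, ∃ t : ℝ, AffineMap.lineMap y x t ∈ convexHull ℝ (A.erase a : Set E) := by
  obtain ⟨wx, hwx₀, hwx₁, rfl⟩ := Finset.mem_convexHull'.1 hx
  obtain ⟨wy, hwy₀, hwy₁, rfl⟩ := Finset.mem_convexHull'.1 hy
  have hlt : ∃ a ∈ A, wx a < wy a := by
    by_contra! hle
    have heq := (Finset.sum_eq_sum_iff_of_le hle).1 (hwy₁.trans hwx₁.symm)
    exact hxy (Finset.sum_congr rfl fun a ha => by rw [heq a ha]).symm
  obtain ⟨t, ht₀, a, ha, hta⟩ := Finset.exists_forall_nonneg_add_mul_sub_eq_zero hwy₀ hlt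
  have hsum : ∑ a ∈ A, (wy a + t * (wx a - wy a)) = 1 := by
    rw [Finset.sum_add_distrib, ← Finset.mul_sum, Finset.sum_sub_distrib, hwx₁, hwy₁]
    ring
  refine ⟨a, ha, t, ?_⟩
  convert Finset.sum_smul_mem_convexHull_erase ht₀ hsum hta using 1
  simp only [AffineMap.lineMap_apply_module', add_smul, mul_smul, sub_smul,
    Finset.sum_add_distrib, Finset.sum_sub_distrib, ← Finset.smul_sum]
  abel

end ConvexHull

theorem AffineBasis.coe_eq_sum_coord_smul {ι k E : Type*} [Fintype ι] [Ring k]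
    [AddCommGroup E] [Module k E] {S : AffineSubspace k E} [Nonempty S] (b : AffineBasis ι k S)
    (q : S) : (q : E) = ∑ i, b.coord i q • (b i : E) := by
  conv_lhs => rw [← b.affineCombination_coord_eq_self q]
  rw [← S.subtype_apply, Finset.map_affineCombination _ _ _ (b.sum_coord_apply_eq_one q),
    Finset.affineCombination_eq_linear_combination _ _ _ (b.sum_coord_apply_eq_one q)]
  rfl

section IntrinsicInterior

variable {E : Type*} [NormedAddCommGroup E] [NormedSpace ℝ E]

theorem AffineIndependent.sum_smul_mem_intrinsicInterior_convexHull {A : Finset E}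
    (hA : AffineIndependent ℝ ((↑) : A → E)) {w : E → ℝ} (hw₀ : ∀ a ∈ A, 0 < w a)
    (hw₁ : ∑ a ∈ A, w a = 1) :
    ∑ a ∈ A, w a • a ∈ intrinsicInterior ℝ (convexHull ℝ (A : Set E)) := by
  set x := ∑ a ∈ A, w a • a
  have hxA : x ∈ convexHull ℝ (A : Set E) :=
    Finset.mem_convexHull'.2 ⟨w, fun a ha => (hw₀ a ha).le, hw₁, rfl⟩
  have hxS : x ∈ affineSpan ℝ (A : Set E) := by
    rw [← affineSpan_convexHull]; exact subset_affineSpan ℝ _ hxA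
  have : Nonempty (A : Set E) := (Finset.nonempty_of_sum_ne_zero (hw₁ ▸ one_ne_zero)).to_subtype
  let b : AffineBasis A ℝ (affineSpan ℝ (A : Set E)) :=
    ⟨fun a => ⟨a, subset_affineSpan ℝ _ a.2⟩, hA.of_comp (affineSpan ℝ _).subtype, by
      convert affineSpan_coe_preimage_eq_top (k := ℝ) (A : Set E)
      ext q
      exact ⟨by rintro ⟨a, rfl⟩; exact a.2, fun hq => ⟨⟨q, hq⟩, rfl⟩⟩⟩
  have := b.finiteDimensional
  have hcoord : ∀ a, b.coord a ⟨x, hxS⟩ = w a := by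
    refine fun a => hA.eq_of_sum_eq_sum (w₁ := fun a => b.coord a ⟨x, hxS⟩)
      (w₂ := fun a : A => w a) ?_ ?_ a (Finset.mem_univ a)
    · rw [b.sum_coord_apply_eq_one, A.sum_coe_sort w, hw₁]
    · exact (b.coe_eq_sum_coord_smul _).symm.trans (A.sum_coe_sort fun a => w a • a).symm
  set U := {q : affineSpan ℝ (A : Set E) | ∀ a, 0 < b.coord a q}
  have hUopen : IsOpen U := by
    simp only [U, Set.ofPred_forall]
    exact isOpen_iInter_of_finite fun a =>
      isOpen_lt continuous_const (continuous_barycentric_coord b a)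
  have hUsub : U ⊆ (↑) ⁻¹' convexHull ℝ (A : Set E) := fun q hq => by
    rw [Set.mem_preimage, b.coe_eq_sum_coord_smul q]
    exact (convex_convexHull ℝ _).sum_mem (fun a _ => (hq a).le) (b.sum_coord_apply_eq_one q)
      fun a _ => subset_convexHull ℝ _ a.2
  simp only [intrinsicInterior]
  rw [affineSpan_convexHull]
  exact ⟨⟨x, hxS⟩, interior_maximal hUsub hUopen fun a => hcoord a ▸ hw₀ a a.2, rfl⟩

theorem AffineIndependent.exists_mem_convexHull_erase_of_mem_intrinsicFrontier
    [DecidableEq E] {A : Finset E} (hA : AffineIndependent ℝ ((↑) : A → E)) {x : E}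
    (hx : x ∈ intrinsicFrontier ℝ (convexHull ℝ (A : Set E))) :
    ∃ a ∈ A, x ∈ convexHull ℝ (A.erase a : Set E) := by
  have hxA := intrinsicFrontier_subset (A.finite_toSet.isClosed_convexHull ℝ) hx
  obtain ⟨w, hw₀, hw₁, rfl⟩ := Finset.mem_convexHull'.1 hxA
  by_contra! hnot
  have hpos : ∀ a ∈ A, 0 < w a := fun a ha =>
    (hw₀ a ha).lt_of_ne fun h => hnot a ha (Finset.sum_smul_mem_convexHull_erase hw₀ hw₁ h.symm)
  rw [← intrinsicClosure_sdiff_intrinsicInterior] at hx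
  exact hx.2 (hA.sum_smul_mem_intrinsicInterior_convexHull hpos hw₁)

end IntrinsicInterior

/-- if the convex hull of a `(j+1)`-element affinely independent set
`A ⊂ ℝ^d` meets an affine subspace `V` in more than one point, or meets it in a
point of its relative boundary, then some `j`-element subset of `A` has its
convex hull meeting `V`. -/
theorem facet_meets_affine_subspace (d j : ℕ) (A : Finset (Fin d → ℝ))
    (hcard : A.card = j + 1)
    (hindep : AffineIndependent ℝ (fun x : A => (x : Fin d → ℝ)))
    (V : AffineSubspace ℝ (Fin d → ℝ))
    (h : (∃ x y : Fin d → ℝ, x ≠ y ∧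
            x ∈ convexHull ℝ (A : Set (Fin d → ℝ)) ∩ (V : Set (Fin d → ℝ)) ∧
            y ∈ convexHull ℝ (A : Set (Fin d → ℝ)) ∩ (V : Set (Fin d → ℝ))) ∨
          (∃ x : Fin d → ℝ, x ∈ (V : Set (Fin d → ℝ)) ∧
            x ∈ intrinsicFrontier ℝ (convexHull ℝ (A : Set (Fin d → ℝ))))) :
    ∃ B : Finset (Fin d → ℝ), B ⊆ A ∧ B.card = j ∧
      (convexHull ℝ (B : Set (Fin d → ℝ)) ∩ (V : Set (Fin d → ℝ))).Nonempty := by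
  classical
  suffices ∃ a ∈ A, (convexHull ℝ (A.erase a : Set (Fin d → ℝ)) ∩ V).Nonempty by
    obtain ⟨a, ha, hmeet⟩ := this
    exact ⟨A.erase a, A.erase_subset a, by simp [Finset.card_erase_of_mem ha, hcard], hmeet⟩
  rcases h with ⟨x, y, hxy, ⟨hxA, hxV⟩, hyA, hyV⟩ | ⟨x, hxV, hxF⟩
  · obtain ⟨a, ha, t, ht⟩ := Finset.exists_lineMap_mem_convexHull_erase hxA hyA hxy
    exact ⟨a, ha, _, ht, AffineMap.lineMap_mem t hyV hxV⟩
  · obtain ⟨a, ha, hx⟩ := hindep.exists_mem_convexHull_erase_of_mem_intrinsicFrontier hxF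
    exact ⟨a, ha, x, hx, hxV⟩
end
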